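/- Let T be a triangulated category with coproducts and A a set of objects with ΣA ⊆ A. Then the subcategory Coprod(A) is closed under direct summands: if X ⊕ Y lies in Coprod(A), then X lies in Coprod(A). -/

import Mathlib

/-!
Eilenberg swindle. If `X ⊞ Y` lies in a coproduct-closed class `S`, so does
`W := ∐_ℕ (X ⊞ Y) ≅ (∐_ℕ X) ⊞ (∐_ℕ Y)`, and shifting the index of `∐_ℕ X` gives `X ⊞ W ≅ W`.
The split triangle `W ⟶ W ⊞ X ⟶ X ⟶ W⟦1⟧` then exhibits `X` as an extension of
`W ⊞ X ≅ W` by `W⟦1⟧`, which both lie in `S` as soon as `S` is closed under `⟦1⟧`.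
This is the case for `Coprod A` when `ΣA ⊆ A`, because the objects whose shift lies in
`Coprod A` form a coproduct-closed class containing `A`.
-/

open CategoryTheory CategoryTheory.Limits CategoryTheory.Pretriangulated

universe v u

variable (C : Type u) [Category.{v} C] [HasZeroObject C] [Preadditive C]
  [HasShift C ℤ] [∀ n : ℤ, (shiftFunctor C n).Additive] [Pretriangulated C]
  [IsTriangulated C] [HasCoproducts.{v} C]

/-- A class of objects closed under isomorphisms, arbitrary (small) coproducts and extensions. -/
def IsCoprodClosed (S : Set C) : Prop :=
  (∀ ⦃X Y : C⦄, (X ≅ Y) → X ∈ S → Y ∈ S) ∧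
  (∀ {ι : Type v} (f : ι → C), (∀ i, f i ∈ S) → (∐ f) ∈ S) ∧
  (∀ T ∈ distTriang C, T.obj₁ ∈ S → T.obj₃ ∈ S → T.obj₂ ∈ S)

/-- `Coprod A`: the smallest subcategory of `C` containing `A` and closed under
arbitrary coproducts and extensions. -/
def Coprod (A : Set C) : Set C := ⋂₀ {S : Set C | A ⊆ S ∧ IsCoprodClosed C S}

section Swindle

variable {D : Type*} [Category D] [HasZeroMorphisms D] [HasBinaryBiproducts D]

noncomputable def sigmaOptionIso {J : Type*} (g : Option J → D) [HasCoproduct g]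
    [HasCoproduct fun j => g (some j)] : (∐ g) ≅ g none ⊞ ∐ fun j => g (some j) where
  hom := Sigma.desc fun
    | none => biprod.inl
    | some j => Sigma.ι (fun j => g (some j)) j ≫ biprod.inr
  inv := biprod.desc (Sigma.ι g none) (Sigma.desc fun j => Sigma.ι g (some j))
  hom_inv_id := by
    ext (_ | j) <;> simp
  inv_hom_id := by
    apply biprod.hom_ext' <;> aesop_cat

noncomputable def sigmaBiprodIso {J : Type*} (f g : J → D) [HasCoproduct f] [HasCoproduct g]
    [HasCoproduct fun j => f j ⊞ g j] : (∐ fun j => f j ⊞ g j) ≅ (∐ f) ⊞ (∐ g) where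
  hom := Sigma.desc fun j => biprod.map (Sigma.ι f j) (Sigma.ι g j)
  inv := biprod.desc (Sigma.desc fun j => biprod.inl ≫ Sigma.ι (fun j => f j ⊞ g j) j)
    (Sigma.desc fun j => biprod.inr ≫ Sigma.ι (fun j => f j ⊞ g j) j)
  hom_inv_id := by
    ext j <;> simp
  inv_hom_id := by
    apply biprod.hom_ext' <;> aesop_cat

variable {J : Type*} [HasCoproductsOfShape J D] [HasCoproductsOfShape (Option J) D]

noncomputable def biprodSigmaConstIso (e : Option J ≃ J) (X : D) :
    X ⊞ (∐ fun _ : J => X) ≅ ∐ fun _ : J => X :=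
  (sigmaOptionIso fun _ : Option J => X).symm ≪≫ Sigma.whiskerEquiv e fun _ => Iso.refl X

noncomputable def biprodSigmaBiprodConstIso (e : Option J ≃ J) (X Y : D) :
    X ⊞ (∐ fun _ : J => X ⊞ Y) ≅ ∐ fun _ : J => X ⊞ Y :=
  biprod.mapIso (Iso.refl X) (sigmaBiprodIso _ _) ≪≫ (biprod.associator _ _ _).symm ≪≫
    biprod.mapIso (biprodSigmaConstIso e X) (Iso.refl _) ≪≫ (sigmaBiprodIso _ _).symm

end Swindle

section CoprodClosure

variable {𝒯 : Type u} [Category.{v} 𝒯] [HasZeroObject 𝒯] [Preadditive 𝒯]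
  [HasShift 𝒯 ℤ] [∀ n : ℤ, (shiftFunctor 𝒯 n).Additive] [Pretriangulated 𝒯] [HasCoproducts.{v} 𝒯]

lemma subset_coprod (A : Set 𝒯) : A ⊆ Coprod 𝒯 A := fun _ hX _ hS => hS.1 hX

lemma coprod_isCoprodClosed (A : Set 𝒯) : IsCoprodClosed 𝒯 (Coprod 𝒯 A) :=
  ⟨fun _ _ e hX S hS => hS.2.1 e (hX S hS),
    fun f hf S hS => hS.2.2.1 f fun i => hf i S hS,
    fun T hT h₁ h₃ S hS => hS.2.2.2 T hT (h₁ S hS) (h₃ S hS)⟩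

lemma coprod_subset {A S : Set 𝒯} (hAS : A ⊆ S) (hS : IsCoprodClosed 𝒯 S) :
    Coprod 𝒯 A ⊆ S := fun _ hX => hX S ⟨hAS, hS⟩

lemma shift_mem_coprod {A : Set 𝒯} (hA : ∀ X ∈ A, X⟦(1:ℤ)⟧ ∈ A) {X : 𝒯}
    (hX : X ∈ Coprod 𝒯 A) : X⟦(1:ℤ)⟧ ∈ Coprod 𝒯 A := by
  obtain ⟨hiso, hsigma, hext⟩ := coprod_isCoprodClosed A
  refine coprod_subset (S := {Z : 𝒯 | Z⟦(1:ℤ)⟧ ∈ Coprod 𝒯 A})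
    (fun Z hZ => subset_coprod A (hA Z hZ)) ⟨?_, ?_, ?_⟩ hX
  · exact fun Z W e hZ => hiso ((shiftFunctor 𝒯 (1:ℤ)).mapIso e) hZ
  · exact fun f hf => hiso (PreservesCoproduct.iso (shiftFunctor 𝒯 (1:ℤ)) f).symm (hsigma _ hf)
  · exact fun T hT h₁ h₃ => hext _ (Triangle.shift_distinguished T hT 1) h₁ h₃

lemma IsCoprodClosed.mem_of_biprod_mem {S : Set 𝒯} (hS : IsCoprodClosed 𝒯 S)
    (hshift : ∀ X ∈ S, X⟦(1:ℤ)⟧ ∈ S) {X Y : 𝒯} (hXY : (X ⊞ Y) ∈ S) : X ∈ S := by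
  obtain ⟨hiso, hsigma, hext⟩ := hS
  let W : 𝒯 := ∐ fun _ : ULift.{v} ℕ => X ⊞ Y
  have hW : W ∈ S := hsigma _ fun _ => hXY
  have hWX : (W ⊞ X) ∈ S := hiso
    ((biprodSigmaBiprodConstIso (Denumerable.equiv₂ _ _) X Y).symm ≪≫ biprod.braiding X W) hW
  exact hext _ (rot_of_distTriang _ (binaryBiproductTriangle_distinguished W X)) hWX
    (hshift W hW)

end CoprodClosure

theorem coprod_closed_under_summands
    (A : Set C) (hA : ∀ X ∈ A, X⟦(1:ℤ)⟧ ∈ A) (X Y : C) (hXY : (X ⊞ Y) ∈ Coprod C A) :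
    X ∈ Coprod C A :=
  (coprod_isCoprodClosed A).mem_of_biprod_mem (fun _ => shift_mem_coprod hA) hXY
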